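/- arXiv:1910.14568 — 3 statements merged into one kernel-verified Lean document; each statement's English description precedes it below -/
import Mathlib

section
/- Let α ∈ ℤ_+^n \ {0} and t > 0. For every decomposition α = Σ_{j=1}^ℓ |β_j| δ_j with distinct nonzero multi-indices δ_1,…,δ_ℓ ∈ ℤ_+^n and nonzero β_1,…,β_ℓ ∈ ℤ_+^p, setting κ = β_1 + ⋯ + β_ℓ, one has |κ|!^t · |δ_1|!^{t|β_1|} ⋯ |δ_ℓ|!^{t|β_ℓ|} ≤ |α|!^t. -/
/-!
Write `m_j = |β_j|` and `d_j = |δ_j| ≥ 1`, so that `|κ| = Σ m_j` and `|α| = Σ m_j d_j`. Raising to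
the power `t ≥ 0`, it suffices to show `(Σ m_j)! ∏ d_j!^{m_j} ≤ (Σ m_j d_j)!`. Listing each `d_j`
with multiplicity `m_j`, this is the case of `k!·∏ aᵢ! ≤ (Σ aᵢ)!` for `k` positive integers `aᵢ`,
which follows by induction on `k` from `(S + 1)·a!·S! ≤ (a + S)!` for `a ≥ 1`: the quotient of the
two sides is `C(a + S, S) / (S + 1) ≥ 1`.
-/

open Finset Nat

theorem Nat.succ_mul_factorial_mul_factorial_le {a : ℕ} (ha : 1 ≤ a) (S : ℕ) :
    (S + 1) * (a ! * S !) ≤ (a + S)! := by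
  have hchoose : S + 1 ≤ (a + S).choose S := by
    simpa [Nat.choose_succ_self_right] using Nat.choose_le_choose S (by omega : S + 1 ≤ a + S)
  calc (S + 1) * (a ! * S !) ≤ (a + S).choose S * (a ! * S !) := Nat.mul_le_mul_right _ hchoose
    _ = (a + S)! := by rw [← mul_assoc, Nat.add_choose_mul_factorial_mul_factorial]

theorem Finset.factorial_card_mul_prod_factorial_le {ι : Type*} [DecidableEq ι] (s : Finset ι)
    (f : ι → ℕ) (hf : ∀ i ∈ s, 1 ≤ f i) :
    (#s)! * ∏ i ∈ s, (f i)! ≤ (∑ i ∈ s, f i)! := by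
  induction s using Finset.induction_on with
  | empty => simp
  | insert a s ha ih =>
    rw [forall_mem_insert] at hf
    have hcard : #s ≤ ∑ i ∈ s, f i := by
      simpa using card_nsmul_le_sum s f 1 hf.2
    rw [card_insert_of_notMem ha, prod_insert ha, sum_insert ha]
    calc (#s + 1)! * ((f a)! * ∏ i ∈ s, (f i)!)
        = (#s + 1) * (f a)! * ((#s)! * ∏ i ∈ s, (f i)!) := by rw [factorial_succ]; ring
      _ ≤ (∑ i ∈ s, f i + 1) * (f a)! * (∑ i ∈ s, f i)! := by gcongr; exact ih hf.2
      _ = (∑ i ∈ s, f i + 1) * ((f a)! * (∑ i ∈ s, f i)!) := mul_assoc _ _ _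
      _ ≤ (f a + ∑ i ∈ s, f i)! := succ_mul_factorial_mul_factorial_le hf.1 _

theorem Finset.factorial_sum_mul_prod_factorial_pow_le {ι : Type*} (s : Finset ι) (m d : ι → ℕ)
    (hd : ∀ i ∈ s, 1 ≤ d i) :
    (∑ i ∈ s, m i)! * ∏ i ∈ s, (d i)! ^ m i ≤ (∑ i ∈ s, m i * d i)! := by
  classical
  simpa [card_sigma, prod_sigma, sum_sigma] using
    factorial_card_mul_prod_factorial_le (s.sigma fun i => range (m i)) (fun x => d x.1)
      fun x hx => hd x.1 (mem_sigma.1 hx).1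

theorem stmt5_general {n p : ℕ} (t : ℝ) (ht : 0 < t) (ℓ : ℕ)
    (δ : Fin ℓ → (Fin n → ℕ)) (β : Fin ℓ → (Fin p → ℕ))
    (hδ : ∀ j, δ j ≠ 0)
    (α : Fin n → ℕ) (hdecomp : α = ∑ j, (∑ i, β j i) • δ j) :
    ((∑ i, (∑ j, β j) i).factorial : ℝ) ^ t *
      ∏ j, (((∑ i, δ j i).factorial : ℝ)) ^ (t * ((∑ i, β j i : ℕ) : ℝ)) ≤
      (((∑ i, α i).factorial : ℝ)) ^ t := by
  set m : Fin ℓ → ℕ := fun j => ∑ i, β j i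
  set d : Fin ℓ → ℕ := fun j => ∑ i, δ j i
  have hd : ∀ j ∈ univ, 1 ≤ d j := fun j _ =>
    Nat.one_le_iff_ne_zero.2 fun h => hδ j <| funext fun i => sum_eq_zero_iff.1 h i (mem_univ i)
  have hκ : ∑ i, (∑ j, β j) i = ∑ j, m j := by
    simp only [Finset.sum_apply, m]; exact sum_comm
  have hα : ∑ i, α i = ∑ j, m j * d j := by
    simp only [hdecomp, Finset.sum_apply, Pi.smul_apply, smul_eq_mul, mul_sum, m, d]; exact sum_comm
  have key : ((∑ j, m j)! : ℝ) * ∏ j, ((d j)! : ℝ) ^ m j ≤ ((∑ j, m j * d j)! : ℝ) := by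
    exact_mod_cast factorial_sum_mul_prod_factorial_pow_le univ m d hd
  calc ((∑ i, (∑ j, β j) i)! : ℝ) ^ t * ∏ j, ((d j)! : ℝ) ^ (t * (m j : ℝ))
      = (((∑ j, m j)! : ℝ) * ∏ j, ((d j)! : ℝ) ^ m j) ^ t := by
        simp only [hκ, mul_comm t, Real.rpow_mul (Nat.cast_nonneg _), Real.rpow_natCast]
        rw [Real.finsetProd_rpow _ _ fun j _ => by positivity,
          Real.mul_rpow (by positivity) (by positivity)]
    _ ≤ ((∑ i, α i)! : ℝ) ^ t := by
        rw [hα]; exact Real.rpow_le_rpow (by positivity) key ht.le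

/-- Bierstone–Milman combinatorial inequality: if `α = Σ_j |β_j| δ_j` with distinct nonzero
multi-indices `δ_j` and nonzero `β_j`, and `κ = Σ_j β_j`, then for every `t > 0`,
`|κ|!^t ∏_j |δ_j|!^{t|β_j|} ≤ |α|!^t`. -/
theorem stmt5 {n p : ℕ} (t : ℝ) (ht : 0 < t) (ℓ : ℕ)
    (δ : Fin ℓ → (Fin n → ℕ)) (β : Fin ℓ → (Fin p → ℕ))
    (hδinj : Function.Injective δ) (hδ : ∀ j, δ j ≠ 0) (hβ : ∀ j, β j ≠ 0)
    (α : Fin n → ℕ) (hα : α ≠ 0) (hdecomp : α = ∑ j, (∑ i, β j i) • δ j) :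
    ((∑ i, (∑ j, β j) i).factorial : ℝ) ^ t *
      ∏ j, (((∑ i, δ j i).factorial : ℝ)) ^ (t * ((∑ i, β j i : ℕ) : ℝ)) ≤
      (((∑ i, α i).factorial : ℝ)) ^ t :=
  stmt5_general t ht ℓ δ β hδ α hdecomp
end

section
/- For every A > 0 and positive integers n, p there exist constants L, D > 0 such that for all nonzero α ∈ ℤ_+^n, the sum over all decompositions α = Σ_{j=1}^ℓ |β_j| δ_j (with distinct nonzero δ_j ∈ ℤ_+^n and nonzero β_j ∈ ℤ_+^p, κ = Σ β_j) of κ!/(β_1! ⋯ β_ℓ!) · A^{|κ|} is at most L · D^{|α|}. -/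
/-- A decomposition of a multi-index `α ∈ ℤ₊ⁿ` in the sense of the Faà di Bruno formula:
a finitely supported assignment `B` of a nonzero `β = B δ ∈ ℤ₊ᵖ` to finitely many distinct
nonzero multi-indices `δ ∈ ℤ₊ⁿ`, with `α = Σ_δ |B δ| • δ`. -/
def FdBDecomp (n p : ℕ) (α : Fin n → ℕ) : Type :=
  {B : (Fin n → ℕ) →₀ (Fin p → ℕ) //
    (0 : Fin n → ℕ) ∉ B.support ∧ α = ∑ δ ∈ B.support, (∑ i, B δ i) • δ}

/-- The term `κ!/(β₁! ⋯ β_ℓ!) ⋅ A^{|κ|}` associated with a decomposition, where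
`κ = Σ_j β_j`. -/
noncomputable def fdbTerm {n p : ℕ} {α : Fin n → ℕ} (A : ℝ) (d : FdBDecomp n p α) : ℝ :=
  ((∏ i, ((∑ δ ∈ d.1.support, d.1 δ) i).factorial : ℕ) : ℝ) /
    ((∏ δ ∈ d.1.support, ∏ i, (d.1 δ i).factorial : ℕ) : ℝ) *
    A ^ (∑ i, (∑ δ ∈ d.1.support, d.1 δ) i)

/-!
Write `S(α)` for the sum and `w(B)` for the weight of a decomposition `B`. Multinomials satisfy
Pascal's rule: if `κ_i ≠ 0`, then `κ_i w(B) = Σ_δ (B δ)_i w(B)` and each summand equals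
`κ_i A w(B - e_{δ,i})`, where `e_{δ,i}` removes one unit from the `i`-th coordinate of `B δ`.
Hence `w(B) = A Σ_δ w(B - e_{δ,i})`, and since `B - e_{δ,i}` is a decomposition of `α - δ`
(injectively in `B`), `S(α) ≤ p A Σ_{0 ≠ δ ≤ α} S(α - δ)`, with `S(0) ≤ 1`. For `0 < x < 1`
we have `Σ_{0 ≠ δ ≤ α} x^{|δ|} ≤ (1 - x)^{-n} - 1`, which is small for small `x`; choosing `x`
with `p A ((1 - x)^{-n} - 1) ≤ 1`, induction on `α` gives `S(α) ≤ x^{-|α|}`.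
-/

open Finset Filter Topology
open scoped Nat

lemma sum_comp_le_sum_of_injective {ι κ M : Type*} [Fintype ι] [Fintype κ] [AddCommMonoid M]
    [PartialOrder M] [IsOrderedAddMonoid M] {f : κ → M} (hf : 0 ≤ f) {e : ι → κ}
    (he : Function.Injective e) : ∑ i, f (e i) ≤ ∑ j, f j := by
  calc ∑ i, f (e i) = ∑ j ∈ univ.map ⟨e, he⟩, f j := (sum_map univ ⟨e, he⟩ f).symm
    _ ≤ ∑ j, f j := sum_le_sum_of_subset_of_nonneg (subset_univ _) fun j _ _ => hf j

section MultiFactorial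

variable {σ : Type*} [Fintype σ]

def multiFactorial (v : σ → ℕ) : ℕ := ∏ i, (v i)!

lemma multiFactorial_pos (v : σ → ℕ) : 0 < multiFactorial v :=
  prod_pos fun _ _ => Nat.factorial_pos _

@[simp] lemma multiFactorial_zero : multiFactorial (0 : σ → ℕ) = 1 := by
  simp [multiFactorial]

lemma multiFactorial_add_single [DecidableEq σ] (v : σ → ℕ) (i : σ) :
    multiFactorial (v + Pi.single i 1) = (v i + 1) * multiFactorial v := by
  have hrest : ∏ j ∈ {i}ᶜ, ((v + Pi.single i 1 : σ → ℕ) j)! = ∏ j ∈ {i}ᶜ, (v j)! :=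
    prod_congr rfl fun j hj => by simp [(by simpa using hj : j ≠ i)]
  rw [multiFactorial, multiFactorial, Fintype.prod_eq_mul_prod_compl i, hrest,
    Fintype.prod_eq_mul_prod_compl i fun j => (v j)!]
  simp [Nat.factorial_succ, mul_assoc]

end MultiFactorial

section Weight

variable {ι σ : Type*}

def fdbKappa (B : ι →₀ (σ → ℕ)) : σ → ℕ := B.sum fun _ β => β

def fdbIndex [AddCommMonoid ι] [Fintype σ] (B : ι →₀ (σ → ℕ)) : ι :=
  B.sum fun δ β => (∑ i, β i) • δ

noncomputable def fdbWeight [Fintype σ] (A : ℝ) (B : ι →₀ (σ → ℕ)) : ℝ :=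
  (multiFactorial (fdbKappa B) : ℝ) / (B.prod fun _ β => multiFactorial β : ℕ) *
    A ^ ∑ i, fdbKappa B i

lemma fdbWeight_nonneg [Fintype σ] {A : ℝ} (hA : 0 ≤ A) (B : ι →₀ (σ → ℕ)) :
    0 ≤ fdbWeight A B := by
  unfold fdbWeight; positivity

lemma fdbKappa_apply (B : ι →₀ (σ → ℕ)) (i : σ) : fdbKappa B i = ∑ δ ∈ B.support, B δ i :=
  sum_apply _ _ _

variable [DecidableEq σ]

lemma fdbKappa_add_single (B : ι →₀ (σ → ℕ)) (δ : ι) (i : σ) :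
    fdbKappa (B + Finsupp.single δ (Pi.single i 1)) = fdbKappa B + Pi.single i 1 := by
  rw [fdbKappa, Finsupp.sum_add_index' (fun _ => rfl) (fun _ _ _ => rfl),
    Finsupp.sum_single_index rfl]
  rfl

lemma fdbIndex_add_single [AddCommMonoid ι] [Fintype σ] (B : ι →₀ (σ → ℕ)) (δ : ι) (i : σ) :
    fdbIndex (B + Finsupp.single δ (Pi.single i 1)) = fdbIndex B + δ := by
  rw [fdbIndex, Finsupp.sum_add_index' (fun _ => by simp)
    (fun _ _ _ => by simp [sum_add_distrib, add_smul]), Finsupp.sum_single_index (by simp)]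
  simp [fdbIndex]

lemma prod_multiFactorial_add_single [Fintype σ] (B : ι →₀ (σ → ℕ)) (δ : ι) (i : σ) :
    (B + Finsupp.single δ (Pi.single i 1)).prod (fun _ β => multiFactorial β) =
      (B δ i + 1) * B.prod fun _ β => multiFactorial β := by
  rw [← Finsupp.mul_prod_erase' _ δ _ fun _ => multiFactorial_zero,
    ← Finsupp.mul_prod_erase' B δ _ fun _ => multiFactorial_zero, Finsupp.erase_add,
    Finsupp.erase_single, add_zero, Finsupp.add_apply, Finsupp.single_eq_same,
    multiFactorial_add_single, mul_assoc]

lemma fdbWeight_add_single [Fintype σ] (A : ℝ) (B : ι →₀ (σ → ℕ)) (δ : ι) (i : σ) :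
    ((B δ i + 1 : ℕ) : ℝ) * fdbWeight A (B + Finsupp.single δ (Pi.single i 1)) =
      ((fdbKappa B i + 1 : ℕ) : ℝ) * A * fdbWeight A B := by
  have hdeg : ∑ j, (fdbKappa B + Pi.single i 1 : σ → ℕ) j = ∑ j, fdbKappa B j + 1 := by
    simp [sum_add_distrib]
  have hden : ((B.prod fun _ β => multiFactorial β : ℕ) : ℝ) ≠ 0 :=
    Nat.cast_ne_zero.2 (prod_pos fun _ _ => multiFactorial_pos _).ne'
  simp only [fdbWeight, fdbKappa_add_single, prod_multiFactorial_add_single,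
    multiFactorial_add_single, hdeg, Nat.cast_mul, pow_succ]
  field_simp

lemma tsub_add_single_cancel {B : ι →₀ (σ → ℕ)} {δ : ι} {i : σ} (h : B δ i ≠ 0) :
    B - Finsupp.single δ (Pi.single i 1) + Finsupp.single δ (Pi.single i 1) = B := by
  refine tsub_add_cancel_of_le (Finsupp.single_le_iff.2 fun j => ?_)
  rcases eq_or_ne j i with rfl | hj
  · simpa [Nat.one_le_iff_ne_zero] using h
  · simp [hj]

lemma fdbWeight_eq_mul_sum [Fintype σ] (A : ℝ)
    {B : ι →₀ (σ → ℕ)} {i : σ} (hi : fdbKappa B i ≠ 0) {s : Finset ι} (hs : B.support ⊆ s) :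
    fdbWeight A B =
      A * ∑ δ ∈ s with B δ i ≠ 0, fdbWeight A (B - Finsupp.single δ (Pi.single i 1)) := by
  have hpeel : ∀ δ, B δ i ≠ 0 → (B δ i : ℝ) * fdbWeight A B =
      fdbKappa B i * A * fdbWeight A (B - Finsupp.single δ (Pi.single i 1)) := by
    intro δ hδ
    have h := fdbWeight_add_single A (B - Finsupp.single δ (Pi.single i 1)) δ i
    rw [tsub_add_single_cancel hδ] at h
    have hκ := congrFun (fdbKappa_add_single (B - Finsupp.single δ (Pi.single i 1)) δ i) i
    rw [tsub_add_single_cancel hδ] at hκ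
    convert h using 3
    · simp [Nat.sub_add_cancel (Nat.one_le_iff_ne_zero.2 hδ)]
    · simp [hκ]
  have hκ : ∑ δ ∈ s with B δ i ≠ 0, (B δ i : ℝ) = fdbKappa B i := by
    rw [sum_filter_of_ne fun δ _ h => by exact_mod_cast h, fdbKappa_apply, Nat.cast_sum]
    exact (sum_subset hs fun δ _ hδ => by simp [Finsupp.notMem_support_iff.1 hδ]).symm
  apply mul_left_cancel₀ (Nat.cast_ne_zero.2 hi : (fdbKappa B i : ℝ) ≠ 0)
  calc (fdbKappa B i : ℝ) * fdbWeight A B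
      = ∑ δ ∈ s with B δ i ≠ 0, (B δ i : ℝ) * fdbWeight A B := by rw [← sum_mul, hκ]
    _ = ∑ δ ∈ s with B δ i ≠ 0,
          fdbKappa B i * A * fdbWeight A (B - Finsupp.single δ (Pi.single i 1)) :=
        sum_congr rfl fun δ hδ => hpeel δ (mem_filter.1 hδ).2
    _ = _ := by rw [← mul_sum, mul_assoc]

lemma fdbWeight_le_mul_sum [Fintype σ] {A : ℝ} (hA : 0 ≤ A)
    {B : ι →₀ (σ → ℕ)} (hB : B ≠ 0) {s : Finset ι} (hs : B.support ⊆ s) :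
    fdbWeight A B ≤
      A * ∑ i, ∑ δ ∈ s with B δ i ≠ 0, fdbWeight A (B - Finsupp.single δ (Pi.single i 1)) := by
  obtain ⟨δ, hδ⟩ := Finsupp.support_nonempty_iff.2 hB
  obtain ⟨i, hi⟩ := Function.ne_iff.1 (Finsupp.mem_support_iff.1 hδ)
  have hκ : fdbKappa B i ≠ 0 := by
    rw [fdbKappa_apply]
    exact ((Nat.pos_of_ne_zero hi).trans_le
      (single_le_sum (f := fun δ => B δ i) (fun _ _ => Nat.zero_le _) hδ)).ne'
  have hnonneg : ∀ j, 0 ≤ ∑ δ ∈ s with B δ j ≠ 0,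
      fdbWeight A (B - Finsupp.single δ (Pi.single j 1)) :=
    fun j => sum_nonneg fun _ _ => fdbWeight_nonneg hA _
  rw [fdbWeight_eq_mul_sum A hκ hs]
  gcongr A * ?_
  exact single_le_sum (fun j _ => hnonneg j) (mem_univ i)

end Weight

namespace FdBDecomp

variable {n p : ℕ} {α : Fin n → ℕ} (d : FdBDecomp n p α)

lemma fdbIndex_eq : fdbIndex d.1 = α := d.2.2.symm

lemma ne_zero_of_mem_support {δ : Fin n → ℕ} (hδ : δ ∈ d.1.support) : δ ≠ 0 :=
  fun h => d.2.1 (h ▸ hδ)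

lemma val_ne_zero (hα : α ≠ 0) : d.1 ≠ 0 := by
  intro h
  apply hα
  rw [← d.fdbIndex_eq, h, fdbIndex, Finsupp.sum_zero_index]

lemma smul_le_of_mem_support {δ : Fin n → ℕ} (hδ : δ ∈ d.1.support) :
    (∑ i, d.1 δ i) • δ ≤ α := by
  calc (∑ i, d.1 δ i) • δ ≤ fdbIndex d.1 := single_le_sum (f := fun δ => (∑ i, d.1 δ i) • δ)
        (fun _ _ _ => Nat.zero_le _) hδ
    _ = α := d.fdbIndex_eq

lemma le_of_mem_support {δ : Fin n → ℕ} (hδ : δ ∈ d.1.support) : δ ≤ α := by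
  have h1 : 1 ≤ ∑ i, d.1 δ i := by
    obtain ⟨i, hi⟩ := Function.ne_iff.1 (Finsupp.mem_support_iff.1 hδ)
    exact (Nat.one_le_iff_ne_zero.2 hi).trans
      (single_le_sum (fun _ _ => Nat.zero_le _) (mem_univ i))
  calc δ = 1 • δ := (one_nsmul δ).symm
    _ ≤ (∑ i, d.1 δ i) • δ := nsmul_le_nsmul_left (fun _ => Nat.zero_le _) h1
    _ ≤ α := d.smul_le_of_mem_support hδ

lemma support_subset : d.1.support ⊆ (Iic α).erase 0 := fun _ hδ =>
  mem_erase.2 ⟨d.ne_zero_of_mem_support hδ, mem_Iic.2 (d.le_of_mem_support hδ)⟩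

lemma apply_le (δ : Fin n → ℕ) (i : Fin p) : d.1 δ i ≤ ∑ j, α j := by
  by_cases hδ : δ ∈ d.1.support
  · obtain ⟨j, hj⟩ := Function.ne_iff.1 (d.ne_zero_of_mem_support hδ)
    calc d.1 δ i ≤ ∑ i, d.1 δ i := single_le_sum (fun _ _ => Nat.zero_le _) (mem_univ i)
      _ ≤ (∑ i, d.1 δ i) * δ j := Nat.le_mul_of_pos_right _ (Nat.pos_of_ne_zero hj)
      _ ≤ α j := d.smul_le_of_mem_support hδ j
      _ ≤ ∑ j, α j := single_le_sum (fun _ _ => Nat.zero_le _) (mem_univ j)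
  · simp [Finsupp.notMem_support_iff.1 hδ]

instance : Finite (FdBDecomp n p α) :=
  Finite.of_injective (β := (Iic α).finsupp fun _ => Iic fun _ : Fin p => ∑ j, α j)
    (fun d => ⟨d.1, mem_finsupp_iff.2 ⟨d.support_subset.trans (erase_subset _ _),
      fun δ _ => mem_Iic.2 fun i => d.apply_le δ i⟩⟩)
    fun _ _ h => Subtype.ext (by simpa using h)

noncomputable instance : Fintype (FdBDecomp n p α) := Fintype.ofFinite _

lemma val_eq_zero (d : FdBDecomp n p 0) : d.1 = 0 := by
  by_contra h
  obtain ⟨δ, hδ⟩ := Finsupp.support_nonempty_iff.2 h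
  exact d.ne_zero_of_mem_support hδ (le_antisymm (d.le_of_mem_support hδ) fun _ => Nat.zero_le _)

noncomputable def tsubSingle (d : FdBDecomp n p α) {δ : Fin n → ℕ} {i : Fin p} (h : d.1 δ i ≠ 0) :
    FdBDecomp n p (α - δ) :=
  ⟨d.1 - Finsupp.single δ (Pi.single i 1), fun h0 => d.2.1 (Finsupp.support_tsub h0), by
    have hindex := fdbIndex_add_single (d.1 - Finsupp.single δ (Pi.single i 1)) δ i
    rw [tsub_add_single_cancel h, d.fdbIndex_eq] at hindex
    exact (eq_tsub_of_add_eq hindex.symm).symm⟩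

lemma fdbTerm_tsubSingle (A : ℝ) (d : FdBDecomp n p α) {δ : Fin n → ℕ} {i : Fin p}
    (h : d.1 δ i ≠ 0) :
    fdbTerm A (d.tsubSingle h) = fdbWeight A (d.1 - Finsupp.single δ (Pi.single i 1)) :=
  rfl

lemma tsubSingle_injective (δ : Fin n → ℕ) (i : Fin p) :
    Function.Injective fun d : {d : FdBDecomp n p α // d.1 δ i ≠ 0} => d.1.tsubSingle d.2 := by
  intro d₁ d₂ h
  have h' : d₁.1.1 - Finsupp.single δ (Pi.single i 1) =
      d₂.1.1 - Finsupp.single δ (Pi.single i 1) := congrArg Subtype.val h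
  apply Subtype.ext (Subtype.ext _)
  rw [← tsub_add_single_cancel d₁.2, h', tsub_add_single_cancel d₂.2]

end FdBDecomp

noncomputable def fdbSum {n : ℕ} (p : ℕ) (A : ℝ) (α : Fin n → ℕ) : ℝ :=
  ∑ d : FdBDecomp n p α, fdbTerm A d

section Recursion

variable {n p : ℕ} {A : ℝ}

lemma fdbTerm_eq_fdbWeight {α : Fin n → ℕ} (d : FdBDecomp n p α) :
    fdbTerm A d = fdbWeight A d.1 :=
  rfl

lemma fdbSum_zero_le : fdbSum p A (0 : Fin n → ℕ) ≤ 1 := by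
  have hsub : Subsingleton (FdBDecomp n p 0) :=
    ⟨fun d₁ d₂ => Subtype.ext (d₁.val_eq_zero.trans d₂.val_eq_zero.symm)⟩
  have hterm : ∀ d : FdBDecomp n p 0, fdbTerm A d = 1 := fun d => by
    simp [fdbTerm_eq_fdbWeight, d.val_eq_zero, fdbWeight, fdbKappa]
  simp only [fdbSum, hterm, sum_const, card_univ, nsmul_eq_mul, mul_one, Nat.cast_le_one]
  exact Fintype.card_le_one_iff_subsingleton.2 hsub

lemma sum_fdbWeight_tsub_single_le (hA : 0 ≤ A) (α δ : Fin n → ℕ) (i : Fin p) :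
    ∑ d : FdBDecomp n p α with d.1 δ i ≠ 0, fdbWeight A (d.1 - Finsupp.single δ (Pi.single i 1)) ≤
      fdbSum p A (α - δ) := by
  rw [sum_subtype (p := fun d : FdBDecomp n p α => d.1 δ i ≠ 0) _ fun d => by simp]
  calc ∑ d : {d : FdBDecomp n p α // d.1 δ i ≠ 0},
        fdbWeight A (d.1.1 - Finsupp.single δ (Pi.single i 1))
      = ∑ d : {d : FdBDecomp n p α // d.1 δ i ≠ 0}, fdbTerm A (d.1.tsubSingle d.2) :=
        sum_congr rfl fun d _ => (d.1.fdbTerm_tsubSingle A d.2).symm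
    _ ≤ fdbSum p A (α - δ) := sum_comp_le_sum_of_injective (fun d => fdbWeight_nonneg hA d.1)
        (FdBDecomp.tsubSingle_injective δ i)

lemma fdbSum_le_mul_sum {α : Fin n → ℕ} (hA : 0 ≤ A) (hα : α ≠ 0) :
    fdbSum p A α ≤ p * A * ∑ δ ∈ (Iic α).erase 0, fdbSum p A (α - δ) := by
  calc fdbSum p A α
      ≤ ∑ d : FdBDecomp n p α, A * ∑ i, ∑ δ ∈ (Iic α).erase 0 with d.1 δ i ≠ 0,
          fdbWeight A (d.1 - Finsupp.single δ (Pi.single i 1)) :=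
        sum_le_sum fun d _ => fdbWeight_le_mul_sum hA (d.val_ne_zero hα) d.support_subset
    _ = A * ∑ i, ∑ δ ∈ (Iic α).erase 0, ∑ d : FdBDecomp n p α with d.1 δ i ≠ 0,
          fdbWeight A (d.1 - Finsupp.single δ (Pi.single i 1)) := by
        rw [← mul_sum, sum_comm]
        congr 1
        refine sum_congr rfl fun i _ => ?_
        simp only [sum_filter]
        exact sum_comm
    _ ≤ A * ∑ _i : Fin p, ∑ δ ∈ (Iic α).erase 0, fdbSum p A (α - δ) := by
        gcongr with i _ δ
        exact sum_fdbWeight_tsub_single_le hA α δ i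
    _ = p * A * ∑ δ ∈ (Iic α).erase 0, fdbSum p A (α - δ) := by
        rw [sum_const, card_univ, Fintype.card_fin, nsmul_eq_mul]
        ring

end Recursion

lemma sum_Iic_erase_zero_pow_le {n : ℕ} {x : ℝ} (hx0 : 0 ≤ x) (hx1 : x < 1) (α : Fin n → ℕ) :
    ∑ δ ∈ (Iic α).erase 0, x ^ ∑ j, δ j ≤ (1 - x)⁻¹ ^ n - 1 := by
  have hgeom : ∀ m : ℕ, ∑ t ∈ Iic m, x ^ t ≤ (1 - x)⁻¹ := fun m => by
    have h := geom_sum_Ico_le_of_lt_one (m := 0) (n := m + 1) hx0 hx1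
    rwa [← range_eq_Ico, Nat.range_succ_eq_Iic, pow_zero, one_div] at h
  have hbox : ∑ δ ∈ Iic α, x ^ ∑ j, δ j ≤ (1 - x)⁻¹ ^ n := by
    calc ∑ δ ∈ Iic α, x ^ ∑ j, δ j = ∏ j, ∑ t ∈ Iic (α j), x ^ t := by
          rw [prod_univ_sum]
          exact sum_congr rfl fun δ _ => (prod_pow_eq_pow_sum _ _ _).symm
      _ ≤ ∏ _j : Fin n, (1 - x)⁻¹ :=
          prod_le_prod (fun j _ => sum_nonneg fun t _ => pow_nonneg hx0 t) fun j _ => hgeom _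
      _ = (1 - x)⁻¹ ^ n := by simp
  rw [sum_erase_eq_sub (mem_Iic.2 (fun _ => Nat.zero_le _))]
  simpa using hbox

lemma fdbSum_le_inv_pow {n p : ℕ} {A : ℝ} (hA : 0 ≤ A) {x : ℝ} (hx0 : 0 < x) (hx1 : x < 1)
    (hx : p * A * ((1 - x)⁻¹ ^ n - 1) ≤ 1) (α : Fin n → ℕ) :
    fdbSum p A α ≤ x⁻¹ ^ ∑ j, α j := by
  induction α using WellFoundedLT.induction with
  | _ α ih =>
  rcases eq_or_ne α 0 with rfl | hα
  · simpa using fdbSum_zero_le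
  have hstep : ∀ δ ∈ (Iic α).erase 0, fdbSum p A (α - δ) ≤ x⁻¹ ^ (∑ j, α j) * x ^ ∑ j, δ j := by
    intro δ hδ
    obtain ⟨hδ0, hδα⟩ := mem_erase.1 hδ
    have hδα : δ ≤ α := mem_Iic.1 hδα
    have hlt : α - δ < α := tsub_le_self.lt_of_ne fun h => hδ0 <| by
      simpa using (tsub_add_cancel_of_le hδα).symm.trans (congrArg (· + δ) h)
    have hdeg : ∑ j, (α - δ) j + ∑ j, δ j = ∑ j, α j := by
      rw [← sum_add_distrib]
      exact sum_congr rfl fun j _ => tsub_add_cancel_of_le (hδα j)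
    calc fdbSum p A (α - δ) ≤ x⁻¹ ^ ∑ j, (α - δ) j := ih _ hlt
      _ = x⁻¹ ^ (∑ j, α j) * x ^ ∑ j, δ j := by
        rw [← hdeg, pow_add, mul_assoc, ← mul_pow, inv_mul_cancel₀ hx0.ne', one_pow, mul_one]
  calc fdbSum p A α ≤ p * A * ∑ δ ∈ (Iic α).erase 0, fdbSum p A (α - δ) :=
        fdbSum_le_mul_sum hA hα
    _ ≤ p * A * ∑ δ ∈ (Iic α).erase 0, x⁻¹ ^ (∑ j, α j) * x ^ ∑ j, δ j := by
        gcongr with δ hδ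
        exact hstep δ hδ
    _ ≤ p * A * ((1 - x)⁻¹ ^ n - 1) * x⁻¹ ^ ∑ j, α j := by
        rw [← mul_sum, mul_comm (x⁻¹ ^ _), ← mul_assoc]
        gcongr
        exact sum_Iic_erase_zero_pow_le hx0.le hx1 α
    _ ≤ x⁻¹ ^ ∑ j, α j := mul_le_of_le_one_left (by positivity) hx

lemma exists_mul_inv_one_sub_pow_sub_one_le (c : ℝ) (n : ℕ) :
    ∃ x : ℝ, 0 < x ∧ x < 1 ∧ c * ((1 - x)⁻¹ ^ n - 1) ≤ 1 := by
  have hcont : ContinuousAt (fun x : ℝ => c * ((1 - x)⁻¹ ^ n - 1)) 0 := by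
    fun_prop (disch := norm_num)
  have hlim : Tendsto (fun x : ℝ => c * ((1 - x)⁻¹ ^ n - 1)) (𝓝[>] 0) (𝓝 0) := by
    simpa using hcont.tendsto.mono_left nhdsWithin_le_nhds
  obtain ⟨x, hx, hx01⟩ :=
    ((hlim.eventually (eventually_le_nhds one_pos)).and (Ioo_mem_nhdsGT one_pos)).exists
  exact ⟨x, hx01.1, hx01.2, hx⟩

theorem stmt6_general (n p : ℕ) (A : ℝ) (hA : 0 < A) :
    ∃ L D : ℝ, 0 < L ∧ 0 < D ∧ ∀ α : Fin n → ℕ, α ≠ 0 →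
      Summable (fdbTerm (p := p) (α := α) A) ∧
      ∑' d : FdBDecomp n p α, fdbTerm A d ≤ L * D ^ (∑ i, α i) := by
  obtain ⟨x, hx0, hx1, hx⟩ := exists_mul_inv_one_sub_pow_sub_one_le (p * A) n
  refine ⟨1, x⁻¹, one_pos, inv_pos.2 hx0, fun α _ => ⟨Summable.of_finite, ?_⟩⟩
  rw [tsum_fintype, one_mul]
  exact fdbSum_le_inv_pow hA.le hx0 hx1 hx α

/-- Bierstone–Milman estimate: for every `A > 0` and positive integers `n, p` there are
`L, D > 0` such that for all nonzero `α`, the sum over all decompositions of `α` of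
`κ!/(β₁!⋯β_ℓ!) A^{|κ|}` is at most `L D^{|α|}`. -/
theorem stmt6 (n p : ℕ) (hn : 0 < n) (hp : 0 < p) (A : ℝ) (hA : 0 < A) :
    ∃ L D : ℝ, 0 < L ∧ 0 < D ∧ ∀ α : Fin n → ℕ, α ≠ 0 →
      Summable (fdbTerm (p := p) (α := α) A) ∧
      ∑' d : FdBDecomp n p α, fdbTerm A d ≤ L * D ^ (∑ i, α i) :=
  stmt6_general n p A hA
end

section
/- Let u be a tempered-type ultradistribution whose Fourier transform F(λu) satisfies |F(λu)(σ,θ)| ≤ C e^{−h|(σ,θ)|^{1/s}} on the cone A₁ = {|σ| ≤ ρ|θ|} and |F(λu)(σ,θ)| ≤ C_ε e^{ε|(σ,θ)|^{1/s}} on A₂ = ℝ^N \ A₁ for every ε > 0. For φ with |F φ(σ)| ≤ M e^{−a|(σ,θ)|^{1/s}} on A₂, define ι_t^*u(φ) = (2π)^{−N} ∫ F(λu)(σ,θ) e^{itθ} Fφ(σ) dσ dθ. Then there exist constants C', b > 0 such that |∂_t^β (ι_t^* u)(φ)| ≤ C' M b^{|β|} |β|!^s for all multi-indices β and all t. -/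
/-!
On the cone `|σ| ≤ ρ|θ|` the factor `F` decays like `e^{-h|(σ,θ)|^{1/s}}`, while off the cone
the decay `e^{-a|·|^{1/s}}` of `Fφ` beats the growth `e^{(a/2)|·|^{1/s}}` of `F`; so the
integrand is `O(e^{-c|(σ,θ)|^{1/s}})` everywhere, with `c = min h (a/2)`. The factor
`(iθ)^β` costs at most `|(σ,θ)|^{|β|}`, and `r^k e^{-c r^{1/s}} ≤ b^k k!^s e^{-(c/2) r^{1/s}}`
with `b = (2s/c)^s`, which leaves an integrable weight.
-/

open MeasureTheory

section

open Real Nat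

lemma pow_mul_exp_neg_mul_rpow_le {s c r : ℝ} (hs : 0 < s) (hc : 0 < c) (hr : 0 ≤ r) (k : ℕ) :
    r ^ k * exp (-c * r ^ (1 / s)) ≤
      ((2 * s / c) ^ s) ^ k * (k ! : ℝ) ^ s * exp (-(c / 2) * r ^ (1 / s)) := by
  set u := r ^ (1 / s)
  have hu : 0 ≤ u := rpow_nonneg hr _
  have hr_eq : r ^ k = (u ^ k) ^ s := by
    rw [← rpow_pow_comm hu, ← rpow_mul hr, one_div_mul_cancel hs.ne', rpow_one]
  -- `v ^ k ≤ k! e^v` at `v = c u / (2 s)`, then raised to the power `s`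
  have hv := pow_div_factorial_le_exp (c / (2 * s) * u) (by positivity) k
  have hu_pow : u ^ k ≤ (2 * s / c) ^ k * (k ! * exp (c / (2 * s) * u)) := by
    rw [div_le_iff₀ (by positivity)] at hv
    calc u ^ k = (2 * s / c) ^ k * (c / (2 * s) * u) ^ k := by
          rw [← mul_pow]; field_simp
      _ ≤ _ := by gcongr; linarith
  have hexp : exp (c / (2 * s) * u) ^ s * exp (-c * u) = exp (-(c / 2) * u) := by
    rw [← exp_mul, ← exp_add]
    congr 1
    field_simp
    ring
  calc r ^ k * exp (-c * u)
      ≤ ((2 * s / c) ^ k * (k ! * exp (c / (2 * s) * u))) ^ s * exp (-c * u) := by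
        rw [hr_eq]; gcongr
    _ = ((2 * s / c) ^ s) ^ k * (k ! : ℝ) ^ s * exp (-(c / 2) * u) := by
        rw [mul_rpow (by positivity) (by positivity), mul_rpow (by positivity) (by positivity),
          ← rpow_pow_comm (by positivity), mul_assoc, mul_assoc, hexp, mul_assoc]

lemma exp_neg_mul_rpow_le_one {c p x : ℝ} (hc : 0 ≤ c) (hx : 0 ≤ x) :
    exp (-c * x ^ p) ≤ 1 := by
  rw [exp_le_one_iff, neg_mul, neg_nonpos]
  exact mul_nonneg hc (rpow_nonneg hx p)

lemma integrable_exp_neg_mul_norm_rpow {E : Type*} [NormedAddCommGroup E] [MeasurableSpace E]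
    [BorelSpace E] [SecondCountableTopology E] (μ : Measure E) [μ.HasTemperateGrowth]
    {s c : ℝ} (hs : 0 < s) (hc : 0 < c) :
    Integrable (fun x : E ↦ exp (-c * ‖x‖ ^ (1 / s))) μ := by
  set l := μ.integrablePower
  have h := integrable_of_le_of_pow_mul_le (μ := μ) (k := 0)
    (f := fun x : E ↦ exp (-c * ‖x‖ ^ (1 / s))) (C₁ := 1)
    (C₂ := ((2 * s / c) ^ s) ^ l * (l ! : ℝ) ^ s)
    (fun x ↦ by
      rw [norm_of_nonneg (exp_pos _).le]; exact exp_neg_mul_rpow_le_one hc.le (norm_nonneg x))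
    (fun x ↦ by
      rw [zero_add, norm_of_nonneg (exp_pos _).le]
      calc ‖x‖ ^ l * exp (-c * ‖x‖ ^ (1 / s))
          ≤ ((2 * s / c) ^ s) ^ l * (l ! : ℝ) ^ s * exp (-(c / 2) * ‖x‖ ^ (1 / s)) :=
            pow_mul_exp_neg_mul_rpow_le hs hc (norm_nonneg x) l
        _ ≤ ((2 * s / c) ^ s) ^ l * (l ! : ℝ) ^ s :=
            mul_le_of_le_one_right (by positivity)
              (exp_neg_mul_rpow_le_one (by positivity) (norm_nonneg x)))
    (continuous_exp.comp (continuous_const.mul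
      (continuous_norm.rpow_const fun _ ↦ Or.inr (by positivity)))).aestronglyMeasurable
  simpa [norm_of_nonneg (exp_pos _).le] using h

lemma norm_prod_I_mul_pow_le {ι : Type*} [Fintype ι] {p : ENNReal} [Fact (1 ≤ p)]
    (θ : PiLp p (fun _ : ι ↦ ℝ)) (β : ι → ℕ) :
    ‖∏ j, (Complex.I * (θ j : ℂ)) ^ β j‖ ≤ ‖θ‖ ^ ∑ j, β j := by
  rw [norm_prod, ← Finset.prod_pow_eq_pow_sum]
  gcongr with j
  rw [norm_pow, norm_mul, Complex.norm_I, one_mul, Complex.norm_real]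
  gcongr
  exact PiLp.norm_apply_le θ j

lemma norm_mul_norm_le_of_cone {E₁ E₂ : Type*} [NormedAddCommGroup E₁] [NormedAddCommGroup E₂]
    {s ρ h a C C₂ M : ℝ} (hC : 0 ≤ C) (hC₂ : 0 ≤ C₂) (hM : 0 ≤ M)
    {F : E₁ → E₂ → ℂ} {Fφ : E₁ → ℂ}
    (hA1 : ∀ (σ : E₁) (θ : E₂), ‖σ‖ ≤ ρ * ‖θ‖ → ‖F σ θ‖ ≤ C * exp (-h * ‖(σ, θ)‖ ^ (1 / s)))
    (hA2 : ∀ (σ : E₁) (θ : E₂), ¬ ‖σ‖ ≤ ρ * ‖θ‖ →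
      ‖F σ θ‖ ≤ C₂ * exp (a / 2 * ‖(σ, θ)‖ ^ (1 / s)))
    (hφbdd : ∀ σ, ‖Fφ σ‖ ≤ M)
    (hφA2 : ∀ (σ : E₁) (θ : E₂), ¬ ‖σ‖ ≤ ρ * ‖θ‖ →
      ‖Fφ σ‖ ≤ M * exp (-a * ‖(σ, θ)‖ ^ (1 / s)))
    (σ : E₁) (θ : E₂) :
    ‖F σ θ‖ * ‖Fφ σ‖ ≤ (C + C₂) * M * exp (-min h (a / 2) * ‖(σ, θ)‖ ^ (1 / s)) := by
  have hw : 0 ≤ ‖(σ, θ)‖ ^ (1 / s) := rpow_nonneg (norm_nonneg _) _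
  by_cases hσθ : ‖σ‖ ≤ ρ * ‖θ‖
  · calc ‖F σ θ‖ * ‖Fφ σ‖ ≤ C * exp (-h * ‖(σ, θ)‖ ^ (1 / s)) * M :=
          mul_le_mul (hA1 σ θ hσθ) (hφbdd σ) (norm_nonneg _) (by positivity)
      _ ≤ (C + C₂) * exp (-min h (a / 2) * ‖(σ, θ)‖ ^ (1 / s)) * M := by
          gcongr
          · linarith
          · exact min_le_left _ _
      _ = _ := by ring
  · calc ‖F σ θ‖ * ‖Fφ σ‖
        ≤ C₂ * exp (a / 2 * ‖(σ, θ)‖ ^ (1 / s)) * (M * exp (-a * ‖(σ, θ)‖ ^ (1 / s))) :=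
          mul_le_mul (hA2 σ θ hσθ) (hφA2 σ θ hσθ) (norm_nonneg _) (by positivity)
      _ = C₂ * M * exp (-(a / 2) * ‖(σ, θ)‖ ^ (1 / s)) := by
          rw [mul_mul_mul_comm, ← exp_add]; ring_nf
      _ ≤ (C + C₂) * M * exp (-min h (a / 2) * ‖(σ, θ)‖ ^ (1 / s)) := by
          gcongr
          · linarith
          · exact min_le_right _ _

lemma norm_monomial_integrand_le {E ι : Type*} [NormedAddCommGroup E] [Fintype ι]
    {s c K : ℝ} (hs : 0 < s) (hc : 0 < c) (hK : 0 ≤ K)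
    {F : E → EuclideanSpace ℝ ι → ℂ} {Fφ : E → ℂ}
    (hdecay : ∀ σ θ, ‖F σ θ‖ * ‖Fφ σ‖ ≤ K * exp (-c * ‖(σ, θ)‖ ^ (1 / s)))
    (β : ι → ℕ) (t : EuclideanSpace ℝ ι) (σ : E) (θ : EuclideanSpace ℝ ι) :
    ‖F σ θ * (∏ j, (Complex.I * (θ j : ℂ)) ^ β j) *
        Complex.exp (Complex.I * (inner ℝ t θ : ℂ)) * Fφ σ‖ ≤
      K * ((2 * s / c) ^ s) ^ (∑ j, β j) * ((∑ j, β j) ! : ℝ) ^ s *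
        exp (-(c / 2) * ‖(σ, θ)‖ ^ (1 / s)) := by
  set k := ∑ j, β j
  have hmonomial : ‖∏ j, (Complex.I * (θ j : ℂ)) ^ β j‖ ≤ ‖(σ, θ)‖ ^ k :=
    (norm_prod_I_mul_pow_le θ β).trans (by gcongr; exact le_max_right _ _)
  calc _ = ‖F σ θ‖ * ‖Fφ σ‖ * ‖∏ j, (Complex.I * (θ j : ℂ)) ^ β j‖ := by
        rw [norm_mul, norm_mul, norm_mul, Complex.norm_exp_I_mul_ofReal]
        ring
    _ ≤ K * exp (-c * ‖(σ, θ)‖ ^ (1 / s)) * ‖(σ, θ)‖ ^ k :=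
        mul_le_mul (hdecay σ θ) hmonomial (norm_nonneg _) (by positivity)
    _ = K * (‖(σ, θ)‖ ^ k * exp (-c * ‖(σ, θ)‖ ^ (1 / s))) := by ring
    _ ≤ K * (((2 * s / c) ^ s) ^ k * (k ! : ℝ) ^ s * exp (-(c / 2) * ‖(σ, θ)‖ ^ (1 / s))) :=
        mul_le_mul_of_nonneg_left (pow_mul_exp_neg_mul_rpow_le hs hc (norm_nonneg _) k) hK
    _ = _ := by ring

end

theorem stmt13_general {m n : ℕ} (s ρ h a C M : ℝ) (hs : 1 < s) (hh : 0 < h)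
    (ha : 0 < a) (hC : 0 < C) (hM : 0 < M)
    (F : EuclideanSpace ℝ (Fin m) → EuclideanSpace ℝ (Fin n) → ℂ)
    (Fφ : EuclideanSpace ℝ (Fin m) → ℂ)
    (hA1 : ∀ σ θ, ‖σ‖ ≤ ρ * ‖θ‖ → ‖F σ θ‖ ≤ C * Real.exp (-h * ‖(σ, θ)‖ ^ (1 / s)))
    (hA2 : ∀ ε > (0 : ℝ), ∃ Cε > (0 : ℝ), ∀ σ θ, ¬ ‖σ‖ ≤ ρ * ‖θ‖ →
      ‖F σ θ‖ ≤ Cε * Real.exp (ε * ‖(σ, θ)‖ ^ (1 / s)))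
    (hφbdd : ∀ σ, ‖Fφ σ‖ ≤ M)
    (hφA2 : ∀ (σ : EuclideanSpace ℝ (Fin m)) (θ : EuclideanSpace ℝ (Fin n)), ¬ ‖σ‖ ≤ ρ * ‖θ‖ → ‖Fφ σ‖ ≤ M * Real.exp (-a * ‖(σ, θ)‖ ^ (1 / s))) :
    ∃ C' b : ℝ, 0 < C' ∧ 0 < b ∧ ∀ (β : Fin n → ℕ) (t : EuclideanSpace ℝ (Fin n)),
      ‖(2 * Real.pi) ^ (-((m : ℝ) + n)) •
          ∫ p : EuclideanSpace ℝ (Fin m) × EuclideanSpace ℝ (Fin n),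
            F p.1 p.2 * (∏ j, (Complex.I * ((p.2 j : ℝ) : ℂ)) ^ (β j)) *
              Complex.exp (Complex.I * ((inner ℝ t p.2 : ℝ) : ℂ)) * Fφ p.1‖ ≤
        C' * M * b ^ (∑ j, β j) * (((∑ j, β j).factorial : ℝ)) ^ s := by
  obtain ⟨C₂, hC₂, hF₂⟩ := hA2 (a / 2) (by positivity)
  set c := min h (a / 2)
  have hc : 0 < c := lt_min hh (by positivity)
  have hdecay := norm_mul_norm_le_of_cone hC.le hC₂.le hM.le hA1 hF₂ hφbdd hφA2
  have : Measure.IsAddHaarMeasure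
      (volume : Measure (EuclideanSpace ℝ (Fin m) × EuclideanSpace ℝ (Fin n))) :=
    Measure.prod.instIsAddHaarMeasure _ _
  have hint := integrable_exp_neg_mul_norm_rpow
    (volume : Measure (EuclideanSpace ℝ (Fin m) × EuclideanSpace ℝ (Fin n)))
    (by linarith : 0 < s) (half_pos hc)
  refine ⟨(C + C₂) * ∫ p, Real.exp (-(c / 2) * ‖p‖ ^ (1 / s)), (2 * s / c) ^ s,
    mul_pos (by positivity) (integral_exp_pos hint), by positivity, fun β t ↦ ?_⟩
  have hscale : ‖(2 * Real.pi) ^ (-((m : ℝ) + n))‖ ≤ 1 := by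
    rw [Real.norm_of_nonneg (by positivity)]
    exact Real.rpow_le_one_of_one_le_of_nonpos (by linarith [Real.pi_gt_three]) (by linarith)
  rw [norm_smul]
  refine (mul_le_of_le_one_left (norm_nonneg _) hscale).trans ?_
  refine (norm_integral_le_of_norm_le (hint.const_mul _) (.of_forall fun p ↦
    norm_monomial_integrand_le (by linarith) hc (by positivity) hdecay β t p.1 p.2)).trans_eq ?_
  rw [integral_const_mul]
  ring

/-- Proposition B.1 (trace of an ultradistribution): if `F = F(λu)` satisfies
`|F(σ,θ)| ≤ C e^{−h|(σ,θ)|^{1/s}}` on the cone `A₁ = {|σ| ≤ ρ|θ|}` and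
`|F(σ,θ)| ≤ C_ε e^{ε|(σ,θ)|^{1/s}}` on its complement for every `ε > 0`, while
`|Fφ(σ)| ≤ M` everywhere and `|Fφ(σ)| ≤ M e^{−a|(σ,θ)|^{1/s}}` off the cone, then the
`t`-derivatives of `ι_t^*u(φ)`, given by inserting factors `(iθ)^β` in the defining
integral, satisfy `|∂_t^β(ι_t^*u)(φ)| ≤ C' M b^{|β|} |β|!^s`. -/
theorem stmt13 {m n : ℕ} (s ρ h a C M : ℝ) (hs : 1 < s) (hρ : 0 < ρ) (hh : 0 < h)
    (ha : 0 < a) (hC : 0 < C) (hM : 0 < M)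
    (F : EuclideanSpace ℝ (Fin m) → EuclideanSpace ℝ (Fin n) → ℂ)
    (Fφ : EuclideanSpace ℝ (Fin m) → ℂ)
    (hFcont : Continuous fun p : EuclideanSpace ℝ (Fin m) × EuclideanSpace ℝ (Fin n) =>
      F p.1 p.2)
    (hφcont : Continuous Fφ)
    (hA1 : ∀ σ θ, ‖σ‖ ≤ ρ * ‖θ‖ → ‖F σ θ‖ ≤ C * Real.exp (-h * ‖(σ, θ)‖ ^ (1 / s)))
    (hA2 : ∀ ε > (0 : ℝ), ∃ Cε > (0 : ℝ), ∀ σ θ, ¬ ‖σ‖ ≤ ρ * ‖θ‖ →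
      ‖F σ θ‖ ≤ Cε * Real.exp (ε * ‖(σ, θ)‖ ^ (1 / s)))
    (hφbdd : ∀ σ, ‖Fφ σ‖ ≤ M)
    (hφA2 : ∀ (σ : EuclideanSpace ℝ (Fin m)) (θ : EuclideanSpace ℝ (Fin n)), ¬ ‖σ‖ ≤ ρ * ‖θ‖ → ‖Fφ σ‖ ≤ M * Real.exp (-a * ‖(σ, θ)‖ ^ (1 / s))) :
    ∃ C' b : ℝ, 0 < C' ∧ 0 < b ∧ ∀ (β : Fin n → ℕ) (t : EuclideanSpace ℝ (Fin n)),
      ‖(2 * Real.pi) ^ (-((m : ℝ) + n)) •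
          ∫ p : EuclideanSpace ℝ (Fin m) × EuclideanSpace ℝ (Fin n),
            F p.1 p.2 * (∏ j, (Complex.I * ((p.2 j : ℝ) : ℂ)) ^ (β j)) *
              Complex.exp (Complex.I * ((inner ℝ t p.2 : ℝ) : ℂ)) * Fφ p.1‖ ≤
        C' * M * b ^ (∑ j, β j) * (((∑ j, β j).factorial : ℝ)) ^ s :=
  stmt13_general s ρ h a C M hs hh ha hC hM F Fφ hA1 hA2 hφbdd hφA2
end
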